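/- arXiv:1808.07574 — 2 statements merged into one kernel-verified Lean document; each statement's English description precedes it below -/
import Mathlib

section
/- Let M be a real square Metzler matrix written in block form M = [[A, B],[C, D]] with A and D square and A invertible. Then M is Metzler stable (all eigenvalues have negative real part) if and only if A and D − C·A⁻¹·B are both Metzler stable. -/
/-- A Metzler matrix: all off-diagonal entries are nonnegative. -/
def IsMetzler {n : Type*} [Fintype n] [DecidableEq n] (M : Matrix n n ℝ) : Prop :=
  ∀ i j, i ≠ j → 0 ≤ M i j

/-- Metzler stability: all (complex) eigenvalues have negative real part. -/
def IsMetzlerStable {n : Type*} [Fintype n] [DecidableEq n] (M : Matrix n n ℝ) : Prop :=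
  IsMetzler M ∧ ∀ μ ∈ spectrum ℂ (M.map (algebraMap ℝ ℂ)), μ.re < 0

/-!
A Metzler matrix `M` is stable iff some `x ≥ 0` has `M x < 0` entrywise.
Given such an `x` (necessarily `x > 0`), Gershgorin's theorem for `diag(x)⁻¹ M diag(x)` puts every
eigenvalue in a disc `|μ - Mₖₖ| ≤ ∑_{j ≠ k} Mₖⱼ xⱼ / xₖ < -Mₖₖ`, so `Re μ < 0`.
Conversely, if `M` is stable, `t - M` is invertible for all `t ≥ 0`, and `(t - M)⁻¹ ≥ 0` for large
`t` by a Neumann series in the nonnegative matrix `M + s`. The set of `t ≥ 0` where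
`(t - M)⁻¹ ≥ 0` is closed in `[0, ∞)`, and it extends a little below each of its points by a
second Neumann series, `(t - c - M)⁻¹ = (1 - c (t - M)⁻¹)⁻¹ (t - M)⁻¹`; so it contains `0`, i.e.
`M⁻¹ ≤ 0`, and `x = -M⁻¹ 1` is a witness.

With this criterion both directions are block computations. A witness `(x, y)` for `M` gives
the witness `x` for `A` and the witness `y` for the Schur complement `S = D - C A⁻¹ B`, which is
Metzler because `A⁻¹ ≤ 0`. Conversely, from `A x = -1` and `S y = -1` with `x, y ≥ 0`, the vector
`(t x - A⁻¹ B y, y)` is a witness for `M` once `t > 0` is small.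
-/

open Matrix Filter Topology Set

namespace Matrix

section EntrywiseNonneg

variable {l m o : Type*}

lemma isClosed_setOf_forall_apply_nonneg : IsClosed {X : Matrix l m ℝ | ∀ i j, 0 ≤ X i j} := by
  simp only [ofPred_forall]
  exact isClosed_iInter fun i => isClosed_iInter fun j => isClosed_le continuous_const (by fun_prop)

variable [Fintype m]

lemma mul_apply_nonneg {X : Matrix l m ℝ} {Y : Matrix m o ℝ} (hX : ∀ i j, 0 ≤ X i j)
    (hY : ∀ i j, 0 ≤ Y i j) (i : l) (j : o) : 0 ≤ (X * Y) i j :=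
  Finset.sum_nonneg fun k _ => mul_nonneg (hX i k) (hY k j)

lemma mulVec_apply_nonneg {X : Matrix l m ℝ} {v : m → ℝ} (hX : ∀ i j, 0 ≤ X i j)
    (hv : ∀ j, 0 ≤ v j) (i : l) : 0 ≤ (X *ᵥ v) i :=
  Finset.sum_nonneg fun k _ => mul_nonneg (hX i k) (hv k)

end EntrywiseNonneg

variable {n : Type*} [Fintype n] [DecidableEq n]

section Neumann

attribute [local instance] Matrix.linftyOpNormedRing Matrix.linftyOpNormedAlgebra

lemma inv_one_sub_apply_nonneg {X : Matrix n n ℝ} (hX : ∀ i j, 0 ≤ X i j) (h : ‖X‖ < 1)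
    (i j : n) : 0 ≤ (1 - X)⁻¹ i j := by
  have hsum := hasSum_geom_series_inverse X h
  rw [← nonsing_inv_eq_ringInverse] at hsum
  exact ((Pi.hasSum.mp (Pi.hasSum.mp hsum i)) j).nonneg fun k => pow_apply_nonneg hX k i j

lemma eventually_inv_one_sub_smul_apply_nonneg {X : Matrix n n ℝ} (hX : ∀ i j, 0 ≤ X i j) :
    ∀ᶠ c in 𝓝[≥] (0 : ℝ), ∀ i j, 0 ≤ (1 - c • X)⁻¹ i j := by
  have hsmall : ∀ᶠ c in 𝓝 (0 : ℝ), ‖c • X‖ < 1 := by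
    have : Tendsto (fun c : ℝ => ‖c • X‖) (𝓝 0) (𝓝 0) := by
      simpa using ((tendsto_id (x := 𝓝 (0 : ℝ))).smul_const X).norm
    exact this.eventually (gt_mem_nhds one_pos)
  filter_upwards [nhdsWithin_le_nhds hsmall, self_mem_nhdsWithin] with c hc (hc0 : 0 ≤ c)
  exact inv_one_sub_apply_nonneg (fun i j => mul_nonneg hc0 (hX i j)) hc

end Neumann

lemma eventually_inv_sub_smul_apply_nonneg {L E : Matrix n n ℝ} (hL : IsUnit L.det)
    (hLinv : ∀ i j, 0 ≤ L⁻¹ i j) (hE : ∀ i j, 0 ≤ E i j) :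
    ∀ᶠ c in 𝓝[≥] (0 : ℝ), ∀ i j, 0 ≤ (L - c • E)⁻¹ i j := by
  filter_upwards [eventually_inv_one_sub_smul_apply_nonneg (mul_apply_nonneg hLinv hE)] with c hc
  have hfac : L - c • E = L * (1 - c • (L⁻¹ * E)) := by
    rw [Matrix.mul_sub, Matrix.mul_smul, mul_nonsing_inv_cancel_left _ _ hL, mul_one]
  rw [hfac, Matrix.mul_inv_rev]
  exact mul_apply_nonneg hc hLinv

lemma exists_norm_sub_diag_le_of_mem_spectrum {K : Type*} [NormedField K]
    {A : Matrix n n K} {μ : K} (hμ : μ ∈ spectrum K A) {x : n → K} (hx : ∀ i, x i ≠ 0) :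
    ∃ k, ‖μ - A k k‖ ≤ ∑ j ∈ Finset.univ.erase k, ‖A k j‖ * ‖x j‖ / ‖x k‖ := by
  let u : (Matrix n n K)ˣ := ⟨diagonal x, diagonal x⁻¹, by simp [hx], by simp [hx]⟩
  rw [← spectrum.units_conjugate' (u := u), ← spectrum_toLin',
    ← Module.End.hasEigenvalue_iff_mem_spectrum] at hμ
  obtain ⟨k, hk⟩ := eigenvalue_mem_ball hμ
  refine ⟨k, ?_⟩
  simpa [u, Metric.mem_closedBall, dist_eq_norm, diagonal_mul, mul_diagonal, hx k, mul_comm,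
    mul_left_comm, div_eq_mul_inv] using hk

variable {M : Matrix n n ℝ}

lemma isUnit_det_smul_one_sub (hM : ∀ μ ∈ spectrum ℂ (M.map (algebraMap ℝ ℂ)), μ.re < 0)
    {t : ℝ} (ht : 0 ≤ t) : IsUnit (t • 1 - M).det := by
  have hmap : (algebraMap ℝ ℂ).mapMatrix (t • 1 - M)
      = algebraMap ℂ (Matrix n n ℂ) t - M.map (algebraMap ℝ ℂ) := by
    ext i j
    rcases eq_or_ne i j with rfl | hij <;> simp [algebraMap_eq_diagonal, *]
  have : (t : ℂ) ∉ spectrum ℂ (M.map (algebraMap ℝ ℂ)) :=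
    fun h => (hM _ h).not_ge (by simpa using ht)
  rw [spectrum.notMem_iff, ← hmap, isUnit_iff_isUnit_det, ← RingHom.map_det] at this
  exact (isUnit_map_iff _ _).mp this

lemma continuousOn_inv_smul_one_sub
    (hM : ∀ μ ∈ spectrum ℂ (M.map (algebraMap ℝ ℂ)), μ.re < 0) :
    ContinuousOn (fun t : ℝ => (t • 1 - M)⁻¹) (Ici 0) := by
  intro t ht
  refine ContinuousAt.continuousWithinAt ?_
  refine (continuousAt_matrix_inv _ ?_).comp (f := fun t : ℝ => t • (1 : Matrix n n ℝ) - M)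
    (by fun_prop)
  rw [Ring.inverse_eq_inv']
  exact continuousAt_inv₀ (isUnit_det_smul_one_sub hM ht).ne_zero

end Matrix

section Criterion

variable {n : Type*} [Fintype n] [DecidableEq n] {M : Matrix n n ℝ}

lemma IsMetzler.pos_of_mulVec_neg (hM : IsMetzler M) {x : n → ℝ} (hx : ∀ i, 0 ≤ x i)
    (hMx : ∀ i, (M *ᵥ x) i < 0) (i : n) : 0 < x i := by
  refine (hx i).lt_of_ne fun hxi => (hMx i).not_ge (Finset.sum_nonneg fun j _ => ?_)
  rcases eq_or_ne i j with rfl | hij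
  · simp [← hxi]
  · exact mul_nonneg (hM i j hij) (hx j)

lemma IsMetzler.isMetzlerStable_of_mulVec_neg (hM : IsMetzler M) {x : n → ℝ}
    (hx : ∀ i, 0 ≤ x i) (hMx : ∀ i, (M *ᵥ x) i < 0) : IsMetzlerStable M := by
  refine ⟨hM, fun μ hμ => ?_⟩
  have hxpos := hM.pos_of_mulVec_neg hx hMx
  obtain ⟨k, hk⟩ := exists_norm_sub_diag_le_of_mem_spectrum hμ (x := fun i => (x i : ℂ))
    fun i => Complex.ofReal_ne_zero.2 (hxpos i).ne'
  have hoff : ∑ j ∈ Finset.univ.erase k, M k j * x j < -(M k k * x k) := by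
    have := hMx k
    rw [mulVec, dotProduct, ← Finset.add_sum_erase _ _ (Finset.mem_univ k)] at this
    linarith
  have hrad : ∑ j ∈ Finset.univ.erase k,
        ‖(M.map (algebraMap ℝ ℂ)) k j‖ * ‖(x j : ℂ)‖ / ‖(x k : ℂ)‖
      = (∑ j ∈ Finset.univ.erase k, M k j * x j) / x k := by
    rw [Finset.sum_div]
    refine Finset.sum_congr rfl fun j hj => ?_
    simp [abs_of_nonneg, hM k j (Finset.ne_of_mem_erase hj).symm, hx j, (hxpos k).le]
  have hre : μ.re - M k k ≤ ‖μ - (M.map (algebraMap ℝ ℂ)) k k‖ := by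
    simpa using Complex.re_le_norm (μ - M k k)
  have hlt : (∑ j ∈ Finset.univ.erase k, M k j * x j) / x k < -M k k := by
    rw [div_lt_iff₀ (hxpos k)]
    linarith
  linarith

lemma IsMetzler.eventually_inv_smul_one_sub_apply_nonneg (hM : IsMetzler M) :
    ∀ᶠ t : ℝ in atTop, ∀ i j, 0 ≤ (t • (1 : Matrix n n ℝ) - M)⁻¹ i j := by
  obtain ⟨s, hs⟩ : ∃ s : ℝ, ∀ i j, 0 ≤ (M + s • 1) i j := by
    refine (eventually_all.2 fun i => eventually_all.2 fun j => ?_).exists (f := atTop)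
    rcases eq_or_ne i j with rfl | hij
    · filter_upwards [eventually_ge_atTop (-M i i)] with s hs
      simp only [Matrix.add_apply, Matrix.smul_apply, one_apply_eq, smul_eq_mul, mul_one]
      linarith
    · exact Eventually.of_forall fun s => by simpa [one_apply_ne hij] using hM i j hij
  have hc : Tendsto (fun t => (t + s)⁻¹) atTop (𝓝[≥] 0) :=
    (tendsto_inv_atTop_nhdsGT_zero.comp (tendsto_atTop_add_const_right _ s tendsto_id)).mono_right
      (nhdsWithin_mono _ Ioi_subset_Ici_self)
  filter_upwards [hc.eventually (eventually_inv_one_sub_smul_apply_nonneg hs),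
    eventually_gt_atTop (-s)] with t ht hts
  have hpos : 0 < t + s := by linarith
  have hfac : t • 1 - M = (1 - (t + s)⁻¹ • (M + s • 1)) * ((t + s) • 1) := by
    rw [Matrix.mul_smul, mul_one, smul_sub, smul_smul, mul_inv_cancel₀ hpos.ne', one_smul,
      add_smul]
    abel
  have hscalar : ((t + s) • (1 : Matrix n n ℝ))⁻¹ = (t + s)⁻¹ • 1 :=
    inv_eq_left_inv (by rw [smul_mul_smul, inv_mul_cancel₀ hpos.ne', one_mul, one_smul])
  intro i j
  rw [hfac, Matrix.mul_inv_rev, hscalar, smul_mul, one_mul, Matrix.smul_apply, smul_eq_mul]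
  exact mul_nonneg (inv_nonneg.2 hpos.le) (ht i j)

lemma IsMetzlerStable.inv_smul_one_sub_apply_nonneg (hM : IsMetzlerStable M) {t : ℝ}
    (ht : 0 ≤ t) : ∀ i j, 0 ≤ (t • (1 : Matrix n n ℝ) - M)⁻¹ i j := by
  set s := {t : ℝ | ∀ i j, 0 ≤ (t • (1 : Matrix n n ℝ) - M)⁻¹ i j}
  obtain ⟨T, hTs, htT⟩ :=
    ((IsMetzler.eventually_inv_smul_one_sub_apply_nonneg hM.1).and (eventually_ge_atTop t)).exists
  have hclosed : IsClosed (s ∩ Icc t T) := by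
    rw [inter_comm]
    exact ((continuousOn_inv_smul_one_sub hM.2).mono fun u hu => ht.trans hu.1)
      |>.preimage_isClosed_of_isClosed isClosed_Icc isClosed_setOf_forall_apply_nonneg
  refine hclosed.mem_of_ge_of_forall_exists_lt hTs htT fun u ⟨hus, hu⟩ => ?_
  have hstep := eventually_inv_sub_smul_apply_nonneg (E := 1)
    (isUnit_det_smul_one_sub hM.2 (ht.trans hu.1.le)) hus
    (fun i j => by rw [one_apply]; split_ifs <;> norm_num)
  obtain ⟨c, hc, hc0, hcu⟩ := ((hstep.filter_mono (nhdsWithin_mono _ Ioi_subset_Ici_self)).and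
    (Ioo_mem_nhdsGT (sub_pos.2 hu.1))).exists
  refine ⟨u - c, ?_, by linarith, by linarith⟩
  show ∀ i j, 0 ≤ ((u - c) • (1 : Matrix n n ℝ) - M)⁻¹ i j
  rwa [sub_smul, sub_right_comm]

lemma IsMetzlerStable.isUnit_det (hM : IsMetzlerStable M) : IsUnit M.det := by
  simpa [det_neg] using isUnit_det_smul_one_sub hM.2 le_rfl

lemma IsMetzlerStable.inv_apply_nonpos (hM : IsMetzlerStable M) (i j : n) : M⁻¹ i j ≤ 0 := by
  have hneg : (-M)⁻¹ = -M⁻¹ :=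
    inv_eq_left_inv (by rw [neg_mul_neg, nonsing_inv_mul _ hM.isUnit_det])
  simpa [hneg] using hM.inv_smul_one_sub_apply_nonneg le_rfl i j

lemma IsMetzlerStable.exists_nonneg_mulVec_eq_neg_one (hM : IsMetzlerStable M) :
    ∃ x : n → ℝ, (∀ i, 0 ≤ x i) ∧ M *ᵥ x = -1 := by
  refine ⟨-M⁻¹ *ᵥ 1, mulVec_apply_nonneg (fun i j => neg_nonneg.2 (hM.inv_apply_nonpos i j))
    fun _ => zero_le_one, ?_⟩
  rw [mulVec_mulVec, Matrix.mul_neg, mul_nonsing_inv _ hM.isUnit_det, neg_mulVec, one_mulVec]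

end Criterion

lemma exists_pos_forall_mul_lt_one {ι : Type*} [Finite ι] (v : ι → ℝ) :
    ∃ t : ℝ, 0 < t ∧ ∀ i, t * v i < 1 := by
  have hsmall : ∀ᶠ t in 𝓝 (0 : ℝ), ∀ i, t * v i < 1 := eventually_all.2 fun i => by
    have : Tendsto (fun t : ℝ => t * v i) (𝓝 0) (𝓝 0) := by
      simpa using (tendsto_id (x := 𝓝 (0 : ℝ))).mul_const (v i)
    exact this.eventually (gt_mem_nhds one_pos)
  obtain ⟨t, ht, ht0⟩ := ((hsmall.filter_mono nhdsWithin_le_nhds).and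
    (self_mem_nhdsWithin (s := Ioi (0 : ℝ)))).exists
  exact ⟨t, ht0, ht⟩

section Blocks

variable {n m : Type*} [Fintype n] [DecidableEq n] [Fintype m] [DecidableEq m]
  {A : Matrix n n ℝ} {B : Matrix n m ℝ} {C : Matrix m n ℝ} {D : Matrix m m ℝ}

lemma isMetzler_fromBlocks_iff : IsMetzler (fromBlocks A B C D) ↔
    IsMetzler A ∧ (∀ i j, 0 ≤ B i j) ∧ (∀ i j, 0 ≤ C i j) ∧ IsMetzler D := by
  constructor
  · intro h
    exact ⟨fun i j hij => h (.inl i) (.inl j) (by simpa), fun i j => h (.inl i) (.inr j) (by simp),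
      fun i j => h (.inr i) (.inl j) (by simp), fun i j hij => h (.inr i) (.inr j) (by simpa)⟩
  · rintro ⟨hA, hB, hC, hD⟩ (i | i) (j | j) hij
    · exact hA i j (by simpa using hij)
    · exact hB i j
    · exact hC i j
    · exact hD i j (by simpa using hij)

lemma IsMetzler.schur_complement (hD : IsMetzler D) (hB : ∀ i j, 0 ≤ B i j)
    (hC : ∀ i j, 0 ≤ C i j) (hA : ∀ i j, A⁻¹ i j ≤ 0) : IsMetzler (D - C * A⁻¹ * B) := by
  intro i j hij
  have := mul_apply_nonneg (mul_apply_nonneg (Y := -A⁻¹) hC fun i j => neg_nonneg.2 (hA i j)) hB i j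
  rw [Matrix.mul_neg, Matrix.neg_mul, neg_apply, neg_nonneg] at this
  rw [Matrix.sub_apply]
  linarith [hD i j hij]

lemma IsMetzlerStable.of_fromBlocks (h : IsMetzlerStable (fromBlocks A B C D)) :
    IsMetzlerStable A ∧ IsMetzlerStable (D - C * A⁻¹ * B) := by
  obtain ⟨hAm, hB, hC, hDm⟩ := isMetzler_fromBlocks_iff.mp h.1
  obtain ⟨w, hw0, hw⟩ := h.exists_nonneg_mulVec_eq_neg_one
  set x := w ∘ Sum.inl
  set y := w ∘ Sum.inr
  have hx0 : ∀ i, 0 ≤ x i := fun i => hw0 (.inl i)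
  have hy0 : ∀ i, 0 ≤ y i := fun i => hw0 (.inr i)
  rw [fromBlocks_mulVec] at hw
  have h₁ : A *ᵥ x + B *ᵥ y = -1 := funext fun i => congrFun hw (.inl i)
  have h₂ : C *ᵥ x + D *ᵥ y = -1 := funext fun i => congrFun hw (.inr i)
  have hA : IsMetzlerStable A := hAm.isMetzlerStable_of_mulVec_neg hx0 fun i => by
    have hrow := congrFun h₁ i
    have hBy := mulVec_apply_nonneg hB hy0 i
    simp only [Pi.add_apply, Pi.neg_apply, Pi.one_apply] at hrow
    linarith
  have hCA : ∀ i j, 0 ≤ (C * -A⁻¹) i j :=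
    mul_apply_nonneg hC fun i j => neg_nonneg.2 (hA.inv_apply_nonpos i j)
  have hSy : (D - C * A⁻¹ * B) *ᵥ y = -1 - (C * -A⁻¹) *ᵥ 1 := by
    calc (D - C * A⁻¹ * B) *ᵥ y = (C *ᵥ x + D *ᵥ y) - (C * A⁻¹) *ᵥ (A *ᵥ x + B *ᵥ y) := by
          rw [mulVec_add, mulVec_mulVec, mulVec_mulVec, Matrix.mul_assoc C A⁻¹ A,
            nonsing_inv_mul _ hA.isUnit_det, Matrix.mul_one, sub_mulVec]
          abel
      _ = -1 - (C * -A⁻¹) *ᵥ 1 := by rw [h₁, h₂, Matrix.mul_neg, neg_mulVec, mulVec_neg]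
  refine ⟨hA, (hDm.schur_complement hB hC hA.inv_apply_nonpos).isMetzlerStable_of_mulVec_neg
    hy0 fun i => ?_⟩
  have := mulVec_apply_nonneg (v := 1) hCA (fun _ => zero_le_one) i
  rw [hSy, Pi.sub_apply, Pi.neg_apply, Pi.one_apply]
  linarith

lemma IsMetzlerStable.fromBlocks (hA : IsMetzlerStable A)
    (hS : IsMetzlerStable (D - C * A⁻¹ * B)) (hM : IsMetzler (fromBlocks A B C D)) :
    IsMetzlerStable (fromBlocks A B C D) := by
  obtain ⟨-, hB, hC, -⟩ := isMetzler_fromBlocks_iff.mp hM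
  obtain ⟨x, hx0, hx⟩ := hA.exists_nonneg_mulVec_eq_neg_one
  obtain ⟨y, hy0, hy⟩ := hS.exists_nonneg_mulVec_eq_neg_one
  obtain ⟨t, ht0, ht⟩ := exists_pos_forall_mul_lt_one (C *ᵥ x)
  set z := (-A⁻¹ * B) *ᵥ y
  have hz0 : ∀ i, 0 ≤ z i := mulVec_apply_nonneg
    (mul_apply_nonneg (X := -A⁻¹) (fun i j => neg_nonneg.2 (hA.inv_apply_nonpos i j)) hB) hy0
  have hAz : A *ᵥ z = -(B *ᵥ y) := by
    rw [mulVec_mulVec, ← Matrix.mul_assoc, Matrix.mul_neg, mul_nonsing_inv _ hA.isUnit_det,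
      Matrix.neg_mul, Matrix.one_mul, neg_mulVec]
  have hCz : C *ᵥ z = -((C * A⁻¹ * B) *ᵥ y) := by
    rw [mulVec_mulVec, ← Matrix.mul_assoc, Matrix.mul_neg, Matrix.neg_mul, neg_mulVec]
  have h₁ : A *ᵥ (t • x + z) + B *ᵥ y = -(t • 1) := by
    rw [mulVec_add, mulVec_smul, hAz, hx, smul_neg]
    abel
  have h₂ : C *ᵥ (t • x + z) + D *ᵥ y = t • (C *ᵥ x) - 1 := by
    rw [sub_eq_add_neg, ← hy, mulVec_add, mulVec_smul, hCz, sub_mulVec]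
    abel
  refine hM.isMetzlerStable_of_mulVec_neg (x := Sum.elim (t • x + z) y) ?_ ?_
  · rintro (i | i)
    · exact add_nonneg (mul_nonneg ht0.le (hx0 i)) (hz0 i)
    · exact hy0 i
  · rw [fromBlocks_mulVec, Sum.elim_comp_inl, Sum.elim_comp_inr, h₁, h₂]
    rintro (i | i)
    · simpa using ht0
    · simpa using ht i

end Blocks

theorem metzler_block_stability_general
    {n m : Type*} [Fintype n] [DecidableEq n] [Fintype m] [DecidableEq m]
    (A : Matrix n n ℝ) (B : Matrix n m ℝ) (C : Matrix m n ℝ) (D : Matrix m m ℝ)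
    (hM : IsMetzler (Matrix.fromBlocks A B C D)) :
    IsMetzlerStable (Matrix.fromBlocks A B C D) ↔
      IsMetzlerStable A ∧ IsMetzlerStable (D - C * A⁻¹ * B) :=
  ⟨IsMetzlerStable.of_fromBlocks, fun h => h.1.fromBlocks h.2 hM⟩

theorem metzler_block_stability
    {n m : Type*} [Fintype n] [DecidableEq n] [Fintype m] [DecidableEq m]
    (A : Matrix n n ℝ) (B : Matrix n m ℝ) (C : Matrix m n ℝ) (D : Matrix m m ℝ)
    (hM : IsMetzler (Matrix.fromBlocks A B C D))
    (hA : IsUnit A.det) :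
    IsMetzlerStable (Matrix.fromBlocks A B C D) ↔
      IsMetzlerStable A ∧ IsMetzlerStable (D - C * A⁻¹ * B) :=
  metzler_block_stability_general A B C D hM
end

section
/- Let 0 < f_q f_r < 1, ϖ, δ, Γ, H, a > 0, ℓ ∈ ℕ, n ∈ ℕ, and positive constants α_i, m_i, ν_i, γ_i (0 ≤ i ≤ n). Define s := (ϖ/a)·(1 − f_q f_r)/(f_q (f_q f_r)^ℓ)·(H/Γ) and R₀ via (1/R₀)·Σᵢ αᵢmᵢ/(νᵢ+γᵢ) = s·((1−f_q f_r)/(f_q f_r))·(ϖ/a). If R₀ > 1, then the function T(x) := Σᵢ (αᵢmᵢ/(νᵢ+γᵢ))·( 1/(R₀(1 − s x)) − (νᵢ+γᵢ)/(νᵢ+γᵢ+mᵢ x) ) has exactly one root in the open interval (0, 1/s). -/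
/-!
Write `T(x) = Σᵢ cᵢ (1 / (R₀ (1 - s x)) - dᵢ / (dᵢ + mᵢ x))` with `cᵢ = αᵢmᵢ/(νᵢ+γᵢ) > 0` and
`dᵢ = νᵢ + γᵢ`. On `[0, 1/s)` the first term of each summand increases and the second
decreases, so `T` is strictly increasing there. Since `T(0) = (1/R₀ - 1) Σᵢ cᵢ < 0` and at
`x₁ = (1 - 1/R₀)/s` the first term equals `1` while the second is below `1`, `T` changes sign on
`(0, x₁)`; the intermediate value theorem gives a root and monotonicity makes it unique.
-/

open Set

theorem existsUnique_mem_Ioo_eq_zero_of_strictMonoOn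
    {α β : Type*} [TopologicalSpace α] [ConditionallyCompleteLinearOrder α] [OrderTopology α]
    [DenselyOrdered α] [LinearOrder β] [TopologicalSpace β] [OrderClosedTopology β] [Zero β]
    {f : α → β} {a b c : α} (hmono : StrictMonoOn f (Ico a c)) (hcont : ContinuousOn f (Ico a c))
    (ha : f a < 0) (hb : b ∈ Ioo a c) (hb0 : 0 < f b) :
    ∃! x, x ∈ Ioo a c ∧ f x = 0 := by
  obtain ⟨x, hx, hfx⟩ := intermediate_value_Ioo hb.1.le (hcont.mono (Icc_subset_Ico_right hb.2))
    ⟨ha, hb0⟩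
  have hxc : x ∈ Ioo a c := ⟨hx.1, hx.2.trans hb.2⟩
  refine ⟨x, ⟨hxc, hfx⟩, fun y ⟨hy, hfy⟩ => ?_⟩
  exact hmono.injOn (Ioo_subset_Ico_self hy) (Ioo_subset_Ico_self hxc) (hfy.trans hfx.symm)

theorem strictMonoOn_one_div_mul_one_sub {R s : ℝ} (hR : 0 < R) (hs : 0 < s) :
    StrictMonoOn (fun x => 1 / (R * (1 - s * x))) (Iio (1 / s)) := by
  intro x hx y hy hxy
  have hsy : s * y < 1 := (lt_div_iff₀' hs).1 hy
  have hsxy : s * x < s * y := mul_lt_mul_of_pos_left hxy hs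
  exact one_div_lt_one_div_of_lt (by nlinarith) (by nlinarith)

theorem strictAntiOn_div_add_mul {d m : ℝ} (hd : 0 < d) (hm : 0 < m) :
    StrictAntiOn (fun x => d / (d + m * x)) (Ici 0) := by
  intro x hx y _ hxy
  have hx : 0 ≤ x := hx
  exact div_lt_div_of_pos_left hd (by nlinarith) (by nlinarith)

noncomputable def endemicFn {ι : Type*} [Fintype ι] (c d m : ι → ℝ) (R s x : ℝ) : ℝ :=
  ∑ i, c i * (1 / (R * (1 - s * x)) - d i / (d i + m i * x))

namespace endemicFn

variable {ι : Type*} [Fintype ι] {c d m : ι → ℝ} {R s : ℝ}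

theorem strictMonoOn [Nonempty ι] (hc : ∀ i, 0 < c i) (hd : ∀ i, 0 < d i) (hm : ∀ i, 0 < m i)
    (hR : 0 < R) (hs : 0 < s) : StrictMonoOn (endemicFn c d m R s) (Ico 0 (1 / s)) := by
  intro x hx y hy hxy
  refine Finset.sum_lt_sum_of_nonempty Finset.univ_nonempty fun i _ => ?_
  refine mul_lt_mul_of_pos_left (sub_lt_sub ?_ ?_) (hc i)
  · exact strictMonoOn_one_div_mul_one_sub hR hs hx.2 hy.2 hxy
  · exact strictAntiOn_div_add_mul (hd i) (hm i) hx.1 hy.1 hxy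

theorem continuousOn (hd : ∀ i, 0 < d i) (hm : ∀ i, 0 < m i) (hR : 0 < R) (hs : 0 < s) :
    ContinuousOn (endemicFn c d m R s) (Ico 0 (1 / s)) := by
  refine continuousOn_finsetSum _ fun i _ => continuousOn_const.mul (ContinuousOn.sub ?_ ?_)
  · refine continuousOn_const.div (by fun_prop) fun x hx => ?_
    exact (mul_pos hR (sub_pos.2 ((lt_div_iff₀' hs).1 hx.2))).ne'
  · refine continuousOn_const.div (by fun_prop) fun x hx => ?_
    have : 0 ≤ m i * x := mul_nonneg (hm i).le hx.1
    exact (add_pos_of_pos_of_nonneg (hd i) this).ne'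

theorem apply_zero (hd : ∀ i, 0 < d i) : endemicFn c d m R s 0 = (∑ i, c i) * (1 / R - 1) := by
  simp only [endemicFn, mul_zero, sub_zero, mul_one, add_zero, div_self (hd _).ne', Finset.sum_mul]

theorem apply_zero_neg [Nonempty ι] (hc : ∀ i, 0 < c i) (hd : ∀ i, 0 < d i) (hR : 1 < R) :
    endemicFn c d m R s 0 < 0 := by
  rw [apply_zero hd]
  refine mul_neg_of_pos_of_neg (Finset.sum_pos (fun i _ => hc i) Finset.univ_nonempty) ?_
  rw [sub_neg, div_lt_one (by linarith)]
  exact hR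

theorem apply_one_sub_one_div_div_pos [Nonempty ι] (hc : ∀ i, 0 < c i) (hd : ∀ i, 0 < d i)
    (hm : ∀ i, 0 < m i) (hR : 1 < R) (hs : 0 < s) :
    0 < endemicFn c d m R s ((1 - 1 / R) / s) := by
  have hx : 0 < (1 - 1 / R) / s :=
    div_pos (sub_pos.2 ((div_lt_one (by linarith)).2 hR)) hs
  have hfirst : 1 / (R * (1 - s * ((1 - 1 / R) / s))) = 1 := by
    field_simp
    ring
  refine Finset.sum_pos (fun i _ => mul_pos (hc i) ?_) Finset.univ_nonempty
  rw [hfirst, sub_pos, div_lt_one (by nlinarith [hd i, hm i])]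
  nlinarith [hm i]

end endemicFn

theorem endemic_equation_unique_root_general
    (fq fr ϖ Γ H a : ℝ) (ℓ n : ℕ)
    (α m ν γ : Fin (n + 1) → ℝ)
    (hfq : 0 < fq) (hfr : 0 < fr) (hprod : fq * fr < 1)
    (hϖ : 0 < ϖ) (hΓ : 0 < Γ) (hH : 0 < H) (ha : 0 < a)
    (hα : ∀ i, 0 < α i) (hm : ∀ i, 0 < m i) (hν : ∀ i, 0 < ν i) (hγ : ∀ i, 0 < γ i)
    (s R₀ : ℝ)
    (hs : s = (ϖ / a) * ((1 - fq * fr) / (fq * (fq * fr) ^ ℓ)) * (H / Γ))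
    (hR₀ : 1 < R₀) :
    ∃! x : ℝ, x ∈ Set.Ioo 0 (1 / s) ∧
      ∑ i, (α i * m i / (ν i + γ i)) *
        (1 / (R₀ * (1 - s * x)) - (ν i + γ i) / (ν i + γ i + m i * x)) = 0 := by
  have hs0 : 0 < s := by
    have : 0 < 1 - fq * fr := sub_pos.2 hprod
    rw [hs]
    positivity
  have hd : ∀ i, 0 < ν i + γ i := fun i => add_pos (hν i) (hγ i)
  have hc : ∀ i, 0 < α i * m i / (ν i + γ i) := fun i => div_pos (mul_pos (hα i) (hm i)) (hd i)
  have hR₀pos : 0 < R₀ := zero_lt_one.trans hR₀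
  have hx₁ : (1 - 1 / R₀) / s ∈ Ioo 0 (1 / s) :=
    ⟨div_pos (sub_pos.2 ((div_lt_one hR₀pos).2 hR₀)) hs0,
      div_lt_div_of_pos_right (by simpa using hR₀pos) hs0⟩
  exact existsUnique_mem_Ioo_eq_zero_of_strictMonoOn
    (endemicFn.strictMonoOn hc hd hm hR₀pos hs0) (endemicFn.continuousOn hd hm hR₀pos hs0)
    (endemicFn.apply_zero_neg hc hd hR₀) hx₁ (endemicFn.apply_one_sub_one_div_div_pos hc hd hm hR₀ hs0)

theorem endemic_equation_unique_root
    (fq fr ϖ δ Γ H a : ℝ) (ℓ n : ℕ)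
    (α m ν γ : Fin (n + 1) → ℝ)
    (hfq : 0 < fq) (hfr : 0 < fr) (hprod : fq * fr < 1)
    (hϖ : 0 < ϖ) (hδ : 0 < δ) (hΓ : 0 < Γ) (hH : 0 < H) (ha : 0 < a)
    (hα : ∀ i, 0 < α i) (hm : ∀ i, 0 < m i) (hν : ∀ i, 0 < ν i) (hγ : ∀ i, 0 < γ i)
    (s R₀ : ℝ)
    (hs : s = (ϖ / a) * ((1 - fq * fr) / (fq * (fq * fr) ^ ℓ)) * (H / Γ))
    (hR₀pos : 0 < R₀)
    (hR₀def : (1 / R₀) * ∑ i, α i * m i / (ν i + γ i) =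
      s * ((1 - fq * fr) / (fq * fr)) * (ϖ / a))
    (hR₀ : 1 < R₀) :
    ∃! x : ℝ, x ∈ Set.Ioo 0 (1 / s) ∧
      ∑ i, (α i * m i / (ν i + γ i)) *
        (1 / (R₀ * (1 - s * x)) - (ν i + γ i) / (ν i + γ i + m i * x)) = 0 :=
  endemic_equation_unique_root_general fq fr ϖ Γ H a ℓ n α m ν γ hfq hfr hprod hϖ hΓ hH ha hα hm hν
    hγ s R₀ hs hR₀
end
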